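/- arXiv:1701.06061 — 4 statements merged into one kernel-verified Lean document; each statement's English description precedes it below -/
import Mathlib

section
/- For every unit quaternion x and every purely imaginary quaternion y, the quaternion x * y * conj(x) is again purely imaginary and has the same norm as y; the resulting map ξ₀ sending x to the linear isometry y ↦ x * y * conj(x) of the space of purely imaginary quaternions is a group homomorphism from the group of unit quaternions to the group of linear isometric automorphisms of Im ℍ, its kernel is exactly {1, −1}, and its range is exactly the set of linear isometric automorphisms of Im ℍ with determinant 1; consequently ξ₀ induces a group isomorphism from (unit quaternions)/{±1} onto the rotation group SO(Im ℍ) ≅ SO(3). -/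
noncomputable section

open Quaternion

/-- The purely imaginary quaternions, as a real subspace of `ℍ[ℝ]`. -/
def ImH : Submodule ℝ ℍ[ℝ] where
  carrier := {q | q.re = 0}
  add_mem' := by
    intro a b ha hb
    simp only [Set.mem_setOf_eq, Quaternion.re_add] at *
    simp [ha, hb]
  zero_mem' := by simp
  smul_mem' := by
    intro c a ha
    simp only [Set.mem_setOf_eq] at *
    simp [Quaternion.re_smul, ha]

lemma negOne_mem_unitary : (-1 : ℍ[ℝ]) ∈ unitary ℍ[ℝ] := by
  rw [Unitary.mem_iff]
  constructor <;> simp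

/-!
If conjugation by a unit quaternion `x` is trivial on `Im ℍ`, then `x` commutes with a pure unit
`v` orthogonal to `x`; as orthogonal pure quaternions anticommute, `x.im * v = 0`, so `x` is real,
i.e. `x = ±1`.

For a pure unit `u`, the identity `u y + y u = -2⟪u, y⟫` gives `u y ū = 2⟪u, y⟫ u - y`:
conjugation by `u` is the reflection in the line `ℝ u`, a rotation. A unit `x` factors as
`(x v̄) v` with `v` a pure unit orthogonal to `1` and `x`, and then `x v̄` is pure as well, so every
`ξ₀ x` has determinant `1`. Conversely, the reflection in a plane `vᗮ` is `-1` times the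
reflection in the line `ℝ v`, so by Cartan–Dieudonné every isometry of `Im ℍ` is `± ξ₀ x`, and
`-1` has determinant `-1` on the `3`-dimensional space `Im ℍ`.
-/

open Module Submodule
open scoped RealInnerProductSpace

namespace Quaternion

theorem re_mul_mul_star_of_re_eq_zero (x : ℍ[ℝ]) {y : ℍ[ℝ]} (hy : y.re = 0) :
    (x * y * star x).re = 0 := by
  rw [← star_eq_neg] at hy ⊢
  simp only [star_mul, star_star, hy, mul_assoc, neg_mul, mul_neg]

theorem mem_unitary_of_norm_eq_one {v : ℍ[ℝ]} (hv : ‖v‖ = 1) : v ∈ unitary ℍ[ℝ] := by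
  have h : ((normSq v : ℝ) : ℍ[ℝ]) = 1 := by simp [normSq_eq_norm_mul_self, hv]
  exact ⟨by rw [star_mul_self, h], by rw [self_mul_star, h]⟩

theorem mul_add_mul_swap_of_re_eq_zero {u y : ℍ[ℝ]} (hu : u.re = 0) (hy : y.re = 0) :
    u * y + y * u = ((-2 * ⟪u, y⟫ : ℝ) : ℍ[ℝ]) := by
  have h := self_add_star' (u * y)
  rw [star_mul, star_eq_neg.mpr hu, star_eq_neg.mpr hy, neg_mul_neg] at h
  rw [h, inner_def, star_eq_neg.mpr hy, mul_neg, re_neg]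
  ring_nf

theorem exists_norm_eq_one_re_eq_zero_inner_eq_zero (x : ℍ[ℝ]) :
    ∃ v : ℍ[ℝ], ‖v‖ = 1 ∧ v.re = 0 ∧ ⟪x, v⟫ = 0 := by
  set K := span ℝ (Set.range ![1, x])
  have hK : finrank ℝ K ≤ 2 := (finrank_range_le_card _).trans (by simp)
  have : Nontrivial Kᗮ := by
    apply Module.finrank_pos_iff (R := ℝ) |>.mp
    have := K.finrank_add_finrank_orthogonal
    rw [finrank_eq_four] at this
    omega
  obtain ⟨⟨v, hvK⟩, hv⟩ := exists_norm_eq Kᗮ zero_le_one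
  have h1 : ⟪1, v⟫ = 0 :=
    inner_right_of_mem_orthogonal (subset_span ⟨0, rfl⟩ : (1 : ℍ[ℝ]) ∈ K) hvK
  refine ⟨v, hv, ?_, inner_right_of_mem_orthogonal (subset_span ⟨1, rfl⟩ : x ∈ K) hvK⟩
  simpa [inner_def] using h1

theorem exists_eq_mul_re_eq_zero (x : unitary ℍ[ℝ]) :
    ∃ p v : unitary ℍ[ℝ], (p : ℍ[ℝ]).re = 0 ∧ (v : ℍ[ℝ]).re = 0 ∧ x = p * v := by
  obtain ⟨v, hv, hre, hxv⟩ := exists_norm_eq_one_re_eq_zero_inner_eq_zero x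
  let v' : unitary ℍ[ℝ] := ⟨v, mem_unitary_of_norm_eq_one hv⟩
  refine ⟨x * star v', v', ?_, hre, by rw [mul_assoc, Unitary.star_mul_self, mul_one]⟩
  rw [Submonoid.coe_mul, Unitary.coe_star, ← inner_def]
  exact hxv

theorem eq_one_or_eq_neg_one_of_commute {x : ℍ[ℝ]} (hx : ‖x‖ = 1)
    (hcomm : ∀ y : ℍ[ℝ], y.re = 0 → x * y = y * x) : x = 1 ∨ x = -1 := by
  obtain ⟨v, hv, hre, hxv⟩ := exists_norm_eq_one_re_eq_zero_inner_eq_zero x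
  have hcomm_im : x.im * v = v * x.im := by
    have := hcomm v hre
    rw [← re_add_im x, add_mul, mul_add, coe_commutes] at this
    exact add_left_cancel this
  have him : x.im = 0 := by
    have h := mul_add_mul_swap_of_re_eq_zero (re_im x) hre
    have hinner : ⟪x.im, v⟫ = 0 := by
      rw [← hxv, ← re_add_im x, inner_add_left]
      simp [inner_def, hre]
    rw [← hcomm_im, hinner, mul_zero, coe_zero, ← two_smul ℝ, smul_eq_zero, mul_eq_zero] at h
    have hv0 : v ≠ 0 := by rintro rfl; simp at hv
    exact (h.resolve_left two_ne_zero).resolve_right hv0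
  rw [← re_add_im x, him, add_zero, norm_coe, Real.norm_eq_abs] at hx
  rcases (abs_eq zero_le_one).mp hx with h | h <;> [left; right] <;>
    rw [← re_add_im x, him, add_zero, h] <;> simp

end Quaternion

namespace LinearIsometryEquiv

variable {E : Type*} [NormedAddCommGroup E] [InnerProductSpace ℝ E]

theorem det_mul (f g : E ≃ₗᵢ[ℝ] E) :
    LinearMap.det ((f * g).toLinearEquiv : E →ₗ[ℝ] E) =
      LinearMap.det (f.toLinearEquiv : E →ₗ[ℝ] E) * LinearMap.det (g.toLinearEquiv : E →ₗ[ℝ] E) :=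
  LinearMap.det_comp _ _

theorem det_neg [FiniteDimensional ℝ E] :
    LinearMap.det ((neg ℝ : E ≃ₗᵢ[ℝ] E).toLinearEquiv : E →ₗ[ℝ] E) = (-1) ^ finrank ℝ E := by
  have h := (⊥ : Submodule ℝ E).det_reflection
  rwa [reflection_bot, bot_orthogonal_eq_top, finrank_top] at h

end LinearIsometryEquiv

theorem ImH_eq_orthogonal_span_one : ImH = (ℝ ∙ (1 : ℍ[ℝ]))ᗮ := by
  ext q
  simp only [mem_orthogonal_singleton_iff_inner_right, inner_def, one_mul, re_star]
  rfl

theorem finrank_ImH : finrank ℝ ImH = 3 := by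
  have : Fact (finrank ℝ ℍ[ℝ] = 3 + 1) := ⟨finrank_eq_four⟩
  rw [ImH_eq_orthogonal_span_one]
  exact finrank_orthogonal_span_singleton one_ne_zero

instance : Fact (finrank ℝ ImH = 2 + 1) := ⟨finrank_ImH⟩

def conjImH : unitary ℍ[ℝ] →* (ImH ≃ₗᵢ[ℝ] ImH) where
  toFun x :=
    { toFun y := ⟨x * y * star (x : ℍ[ℝ]), re_mul_mul_star_of_re_eq_zero _ y.2⟩
      invFun y := ⟨star (x : ℍ[ℝ]) * y * x, by
        have h := re_mul_mul_star_of_re_eq_zero (star (x : ℍ[ℝ])) y.2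
        rwa [star_star] at h⟩
      map_add' y z := Subtype.ext (by simp [mul_add, add_mul])
      map_smul' c y := Subtype.ext (by simp)
      left_inv y := Subtype.ext (by simp [← mul_assoc, mul_assoc _ (star (x : ℍ[ℝ]))])
      right_inv y := Subtype.ext (by simp [← mul_assoc, mul_assoc _ (x : ℍ[ℝ])])
      norm_map' y := by simp }
  map_one' := LinearIsometryEquiv.ext fun y => Subtype.ext (by simp)
  map_mul' x y := LinearIsometryEquiv.ext fun z => Subtype.ext (by simp [mul_assoc])

@[simp]
theorem coe_conjImH_apply (x : unitary ℍ[ℝ]) (y : ImH) :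
    (conjImH x y : ℍ[ℝ]) = x * y * star (x : ℍ[ℝ]) :=
  rfl

theorem conjImH_eq_reflection {u : unitary ℍ[ℝ]} (hu : (u : ℍ[ℝ]).re = 0) :
    conjImH u = reflection (ℝ ∙ (⟨u, hu⟩ : ImH)) := by
  ext y : 2
  have hsq : (u : ℍ[ℝ]) * u = -1 := by
    rw [← neg_eq_iff_eq_neg, ← mul_neg, ← star_eq_neg.mpr hu, Unitary.mul_star_self_of_mem u.2]
  have hnorm : ‖(⟨u, hu⟩ : ImH)‖ = 1 := CStarRing.norm_coe_unitary u
  have key : (u : ℍ[ℝ]) * y * star (u : ℍ[ℝ]) = -((u * y + y * u) * u) + y * (u * u) := by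
    rw [star_eq_neg.mpr hu]
    noncomm_ring
  rw [reflection_singleton_apply, hnorm, coe_conjImH_apply, key,
    mul_add_mul_swap_of_re_eq_zero hu y.2, hsq]
  simp only [coe_mul_eq_smul, mul_neg, mul_one, Submodule.coe_sub, Submodule.coe_smul_of_tower,
    RCLike.ofReal_one, one_pow, div_one, Submodule.coe_inner]
  module

theorem det_conjImH_of_re_eq_zero {u : unitary ℍ[ℝ]} (hu : (u : ℍ[ℝ]).re = 0) :
    LinearMap.det ((conjImH u).toLinearEquiv : ImH →ₗ[ℝ] ImH) = 1 := by
  have hu0 : (⟨u, hu⟩ : ImH) ≠ 0 := fun h => by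
    simpa using congrArg (fun w : ImH => ‖(w : ℍ[ℝ])‖) h
  rw [conjImH_eq_reflection hu, det_reflection, finrank_orthogonal_span_singleton (n := 2) hu0]
  norm_num

theorem det_conjImH (x : unitary ℍ[ℝ]) :
    LinearMap.det ((conjImH x).toLinearEquiv : ImH →ₗ[ℝ] ImH) = 1 := by
  obtain ⟨p, v, hp, hv, rfl⟩ := exists_eq_mul_re_eq_zero x
  rw [map_mul, LinearIsometryEquiv.det_mul, det_conjImH_of_re_eq_zero hp,
    det_conjImH_of_re_eq_zero hv, one_mul]

theorem exists_reflection_span_eq_conjImH {v : ImH} (hv : v ≠ 0) :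
    ∃ x, reflection (ℝ ∙ v) = conjImH x := by
  set u := ‖v‖⁻¹ • v
  have hu : ‖(u : ℍ[ℝ])‖ = 1 := by
    rw [Submodule.norm_coe, norm_smul, norm_inv, norm_norm,
      inv_mul_cancel₀ (norm_ne_zero_iff.mpr hv)]
  refine ⟨⟨u, mem_unitary_of_norm_eq_one hu⟩, ?_⟩
  rw [conjImH_eq_reflection (u := ⟨u, _⟩) u.2]
  congr 1
  exact (span_singleton_smul_eq (inv_ne_zero (norm_ne_zero_iff.mpr hv)).isUnit v).symm

theorem exists_reflection_orthogonal_eq_conjImH_or_eq_neg_mul (v : ImH) :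
    ∃ x, reflection (ℝ ∙ v)ᗮ = conjImH x ∨
      reflection (ℝ ∙ v)ᗮ = LinearIsometryEquiv.neg ℝ * conjImH x := by
  rcases eq_or_ne v 0 with rfl | hv
  · refine ⟨1, Or.inl (LinearIsometryEquiv.ext fun y => ?_)⟩
    rw [map_one]
    exact reflection_mem_subspace_eq_self (by simp)
  · obtain ⟨x, hx⟩ := exists_reflection_span_eq_conjImH hv
    exact ⟨x, Or.inr (by rw [reflection_orthogonal, hx, LinearIsometryEquiv.mul_def])⟩

theorem exists_eq_conjImH_or_eq_neg_mul (f : ImH ≃ₗᵢ[ℝ] ImH) :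
    ∃ x, f = conjImH x ∨ f = LinearIsometryEquiv.neg ℝ * conjImH x := by
  obtain ⟨l, -, rfl⟩ := f.reflections_generate_dim
  refine List.prod_induction (fun g => ∃ x, g = conjImH x ∨ g = .neg ℝ * conjImH x) ?_
    ⟨1, Or.inl (map_one _).symm⟩ ?_
  · rintro _ _ ⟨x, rfl | rfl⟩ ⟨y, rfl | rfl⟩
    · exact ⟨x * y, Or.inl (map_mul _ _ _).symm⟩
    · exact ⟨x * y, Or.inr (LinearIsometryEquiv.ext fun z => by simp)⟩
    · exact ⟨x * y, Or.inr (LinearIsometryEquiv.ext fun z => by simp)⟩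
    · exact ⟨x * y, Or.inl (LinearIsometryEquiv.ext fun z => by simp)⟩
  · simp only [List.mem_map]
    rintro _ ⟨v, -, rfl⟩
    exact exists_reflection_orthogonal_eq_conjImH_or_eq_neg_mul v

theorem range_conjImH :
    Set.range conjImH = {f | LinearMap.det (f.toLinearEquiv : ImH →ₗ[ℝ] ImH) = 1} := by
  ext f
  refine ⟨fun ⟨x, hx⟩ => hx ▸ det_conjImH x, fun hf => ?_⟩
  obtain ⟨x, rfl | rfl⟩ := exists_eq_conjImH_or_eq_neg_mul f
  · exact ⟨x, rfl⟩
  · rw [Set.mem_ofPred_eq, LinearIsometryEquiv.det_mul, LinearIsometryEquiv.det_neg, det_conjImH,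
      finrank_ImH] at hf
    norm_num at hf

theorem ker_conjImH :
    ((MonoidHom.ker conjImH : Subgroup (unitary ℍ[ℝ])) : Set (unitary ℍ[ℝ]))
      = {1, ⟨-1, negOne_mem_unitary⟩} := by
  ext x
  simp only [SetLike.mem_coe, MonoidHom.mem_ker, Set.mem_insert_iff, Set.mem_singleton_iff]
  refine ⟨fun hx => ?_, ?_⟩
  · have hcomm (y : ℍ[ℝ]) (hy : y.re = 0) : (x : ℍ[ℝ]) * y = y * x := by
      have h : (x : ℍ[ℝ]) * y * star (x : ℍ[ℝ]) = y :=
        congrArg (fun f => (f ⟨y, hy⟩ : ℍ[ℝ])) hx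
      calc (x : ℍ[ℝ]) * y = x * y * star (x : ℍ[ℝ]) * x := by
            rw [mul_assoc _ (star _), Unitary.coe_star_mul_self, mul_one]
        _ = y * x := by rw [h]
    rcases eq_one_or_eq_neg_one_of_commute (CStarRing.norm_coe_unitary x) hcomm with h | h
    · exact Or.inl (Subtype.ext h)
    · exact Or.inr (Subtype.ext h)
  · rintro (rfl | rfl)
    · exact map_one _
    · exact LinearIsometryEquiv.ext fun y => Subtype.ext (by simp)

/-- For every unit quaternion `x` and purely imaginary quaternion `y`, the quaternion
`x * y * conj x` is purely imaginary with the same norm as `y`; the map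
`ξ₀ : x ↦ (y ↦ x * y * conj x)` is a group homomorphism from the unit quaternions to the
linear isometric automorphisms of `Im ℍ`, with kernel exactly `{1, -1}` and range exactly the
isometries of determinant `1`; consequently it induces a group isomorphism from
`(unit quaternions)/{±1}` onto `SO(Im ℍ) ≅ SO(3)`. -/
theorem xi0_spin3_so3 :
    (∀ x : unitary ℍ[ℝ], ∀ y : ℍ[ℝ], y.re = 0 →
      ((x : ℍ[ℝ]) * y * star (x : ℍ[ℝ])).re = 0 ∧
      ‖(x : ℍ[ℝ]) * y * star (x : ℍ[ℝ])‖ = ‖y‖) ∧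
    ∃ ξ₀ : unitary ℍ[ℝ] →* (ImH ≃ₗᵢ[ℝ] ImH),
      (∀ (x : unitary ℍ[ℝ]) (y : ImH),
        ((ξ₀ x y : ImH) : ℍ[ℝ]) = (x : ℍ[ℝ]) * (y : ℍ[ℝ]) * star (x : ℍ[ℝ])) ∧
      ((MonoidHom.ker ξ₀ : Subgroup (unitary ℍ[ℝ])) : Set (unitary ℍ[ℝ]))
        = {1, ⟨-1, negOne_mem_unitary⟩} ∧
      (Set.range ξ₀
        = {f : ImH ≃ₗᵢ[ℝ] ImH | LinearMap.det (f.toLinearEquiv : ImH →ₗ[ℝ] ImH) = 1}) ∧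
      Nonempty ((unitary ℍ[ℝ] ⧸ MonoidHom.ker ξ₀) ≃* MonoidHom.range ξ₀) :=
  ⟨fun x _ hy => ⟨re_mul_mul_star_of_re_eq_zero x hy, by simp⟩,
    conjImH, coe_conjImH_apply, ker_conjImH, range_conjImH,
    ⟨QuotientGroup.quotientKerEquivRange conjImH⟩⟩

end
end

section
/- For every pair (x, y) of unit quaternions, the map z ↦ x * z * conj(y) is a linear isometric automorphism of ℍ regarded as a 4-dimensional real inner product space; the resulting map η₀ from the direct product of two copies of the group of unit quaternions to the group of linear isometric automorphisms of ℍ is a group homomorphism, its kernel is exactly {(1,1), (−1,−1)}, and its range is exactly the set of linear isometric automorphisms of ℍ with determinant 1; consequently η₀ induces a group isomorphism from (Sp(1) × Sp(1))/{±(1,1)} onto SO(ℍ) ≅ SO(4). -/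
/-!
`η₀ (x, y)` is `z ↦ x z ȳ = L_x (R_ȳ z)`, and the matrices of `L_x` and `R_x` in the basis
`1, i, j, k` have determinant `|x|⁴`, so `η₀ (x, y)` has determinant `1`. If `x z ȳ = z` for all
`z`, then `z = 1` gives `x = y`, so `x` is central, hence real, hence `±1`.
For a unit quaternion `a` the reflection in `a⊥` is `z ↦ -a z̄ a`, so the product of the reflections
in `a⊥` and `b⊥` is `η₀ (a b̄, ā b)`. By Cartan–Dieudonné every isometry of `ℍ` is a product of
reflections, hence lies either in the image of `η₀` or in `σ` times the image, `σ` the reflection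
in `1⊥`; the isometries of the second kind have determinant `-1`.
-/

noncomputable section

open Quaternion

lemma negOne_negOne_mem_unitary :
    ((-1 : ℍ[ℝ]) ∈ unitary ℍ[ℝ]) := by
  rw [Unitary.mem_iff]
  constructor <;> simp

open Matrix Submodule
open scoped RealInnerProductSpace

theorem LinearIsometryEquiv.det_toLinearEquiv_mul {R E : Type*} [CommRing R]
    [SeminormedAddCommGroup E] [Module R E] (f g : E ≃ₗᵢ[R] E) :
    LinearMap.det ((f * g).toLinearEquiv : E →ₗ[R] E) =
      LinearMap.det (f.toLinearEquiv : E →ₗ[R] E) * LinearMap.det (g.toLinearEquiv : E →ₗ[R] E) :=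
  LinearMap.det_comp _ _

theorem Submodule.det_reflection_orthogonal_singleton {𝕜 E : Type*} [RCLike 𝕜]
    [NormedAddCommGroup E] [InnerProductSpace 𝕜 E] [FiniteDimensional 𝕜 E] {v : E} (hv : v ≠ 0) :
    LinearMap.det ((reflection (𝕜 ∙ v)ᗮ).toLinearEquiv : E →ₗ[𝕜] E) = -1 := by
  refine (det_reflection _).trans ?_
  rw [orthogonal_orthogonal, finrank_span_singleton hv, pow_one]

namespace Quaternion

theorem det_eq_of_coords (f : ℍ[ℝ] →ₗ[ℝ] ℍ[ℝ]) (M : Matrix (Fin 4) (Fin 4) ℝ)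
    (hf : ∀ z : ℍ[ℝ], ![(f z).re, (f z).imI, (f z).imJ, (f z).imK] =
      M *ᵥ ![z.re, z.imI, z.imJ, z.imK]) :
    LinearMap.det f = M.det := by
  let e : ℍ[ℝ] ≃ₗ[ℝ] (Fin 4 → ℝ) := QuaternionAlgebra.linearEquivTuple (-1) 0 (-1)
  have hconj : (e : ℍ[ℝ] →ₗ[ℝ] Fin 4 → ℝ) ∘ₗ f ∘ₗ e.symm = toLin' M := LinearMap.ext fun w => by
    obtain ⟨z, rfl⟩ := e.surjective w
    simp only [LinearMap.comp_apply, LinearEquiv.coe_coe, LinearEquiv.symm_apply_apply,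
      toLin'_apply]
    exact hf z
  rw [← LinearMap.det_conj f e, ← LinearMap.det_toLin' M, hconj]

theorem det_mulLeft (x : ℍ[ℝ]) : LinearMap.det (LinearMap.mulLeft ℝ x) = normSq x ^ 2 := by
  rw [det_eq_of_coords _ !![x.re, -x.imI, -x.imJ, -x.imK; x.imI, x.re, -x.imK, x.imJ;
      x.imJ, x.imK, x.re, -x.imI; x.imK, -x.imJ, x.imI, x.re], det_succ_row_zero, normSq_def']
  · simp [Fin.sum_univ_succ, det_fin_three, Fin.succAbove]
    ring
  · intro z
    ext i
    fin_cases i <;> simp [mulVec, dotProduct, Fin.sum_univ_four] <;> ring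

theorem det_mulRight (x : ℍ[ℝ]) : LinearMap.det (LinearMap.mulRight ℝ x) = normSq x ^ 2 := by
  rw [det_eq_of_coords _ !![x.re, -x.imI, -x.imJ, -x.imK; x.imI, x.re, x.imK, -x.imJ;
      x.imJ, -x.imK, x.re, x.imI; x.imK, x.imJ, -x.imI, x.re], det_succ_row_zero, normSq_def']
  · simp [Fin.sum_univ_succ, det_fin_three, Fin.succAbove]
    ring
  · intro z
    ext i
    fin_cases i <;> simp [mulVec, dotProduct, Fin.sum_univ_four] <;> ring

theorem eq_coe_re_of_forall_mul_comm {x : ℍ[ℝ]} (hx : ∀ z, x * z = z * x) : x = x.re := by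
  -- `i` and `j`; an anonymous constructor `⟨0, 1, 0, 0⟩` would elaborate at type
  -- `ℍ[ℝ,-1,0,-1]`, and the `Quaternion` simp lemmas would not fire on it
  have hi := Quaternion.ext_iff.mp (hx ((equivTuple ℝ).symm ![0, 1, 0, 0]))
  have hj := Quaternion.ext_iff.mp (hx ((equivTuple ℝ).symm ![0, 0, 1, 0]))
  simp only [re_mul, imI_mul, imJ_mul, imK_mul] at hi hj
  simp at hi hj
  ext <;> simp <;> linarith

theorem normSq_coe_unitary (x : unitary ℍ[ℝ]) : normSq (x : ℍ[ℝ]) = 1 := by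
  rw [normSq_eq_norm_mul_self, CStarRing.norm_of_mem_unitary x.2, mul_one]

theorem eq_one_or_eq_neg_one_of_forall_mul_comm {x : unitary ℍ[ℝ]}
    (hx : ∀ z, (x : ℍ[ℝ]) * z = z * x) : x = 1 ∨ x = -1 := by
  have hre := eq_coe_re_of_forall_mul_comm hx
  have hnorm := normSq_coe_unitary x
  rw [hre, normSq_coe, sq, mul_self_eq_one_iff] at hnorm
  refine hnorm.imp (fun h => Subtype.ext ?_) (fun h => Subtype.ext ?_) <;>
    rw [hre, h] <;> simp [Unitary.coe_neg]

theorem exists_unitary_reflection_eq {v : ℍ[ℝ]} (hv : v ≠ 0) :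
    ∃ a : unitary ℍ[ℝ], reflection (ℝ ∙ v)ᗮ = reflection (ℝ ∙ (a : ℍ[ℝ]))ᗮ := by
  have hnv : ‖v‖ ≠ 0 := norm_ne_zero_iff.mpr hv
  have hunit : ‖v‖⁻¹ • v ∈ unitary ℍ[ℝ] := by
    rw [Unitary.mem_iff, star_mul_self, self_mul_star, normSq_eq_norm_mul_self, norm_smul,
      norm_inv, norm_norm, inv_mul_cancel₀ hnv]
    simp
  refine ⟨⟨_, hunit⟩, ?_⟩
  simp only [span_singleton_smul_eq (IsUnit.mk0 _ (inv_ne_zero hnv)) v]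

theorem reflection_orthogonal_span_unitary_apply (a : unitary ℍ[ℝ]) (z : ℍ[ℝ]) :
    reflection (ℝ ∙ (a : ℍ[ℝ]))ᗮ z = -(a * star z * a) := by
  have hsum : (a : ℍ[ℝ]) * star z + z * star (a : ℍ[ℝ]) = 2 * (⟪(a : ℍ[ℝ]), z⟫ : ℍ[ℝ]) := by
    rw [inner_def, ← self_add_star, star_mul, star_star]
  calc reflection (ℝ ∙ (a : ℍ[ℝ]))ᗮ z = z - 2 * (⟪(a : ℍ[ℝ]), z⟫ : ℍ[ℝ]) * a := by
        rw [reflection_orthogonal_apply, reflection_singleton_apply,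
          CStarRing.norm_of_mem_unitary a.2]
        simp [mul_assoc, coe_mul_eq_smul]
    _ = -(a * star z * a) + z * (1 - star (a : ℍ[ℝ]) * a) := by
        rw [← hsum]
        noncomm_ring
    _ = -(a * star z * a) := by
        rw [Unitary.star_mul_self_of_mem a.2, sub_self, mul_zero, add_zero]

def spinToOrthogonal : unitary ℍ[ℝ] × unitary ℍ[ℝ] →* (ℍ[ℝ] ≃ₗᵢ[ℝ] ℍ[ℝ]) where
  toFun p := Unitary.mulLeft ℝ ℍ[ℝ] p.1 * Unitary.mulRight ℝ (star p.2)
  map_one' := by ext1; simp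
  map_mul' p q := by ext1; simp [mul_assoc]

@[simp]
theorem spinToOrthogonal_apply (p : unitary ℍ[ℝ] × unitary ℍ[ℝ]) (z : ℍ[ℝ]) :
    spinToOrthogonal p z = p.1 * z * star (p.2 : ℍ[ℝ]) := by
  simp [spinToOrthogonal, mul_assoc]

theorem det_spinToOrthogonal (p : unitary ℍ[ℝ] × unitary ℍ[ℝ]) :
    LinearMap.det ((spinToOrthogonal p).toLinearEquiv : ℍ[ℝ] →ₗ[ℝ] ℍ[ℝ]) = 1 := by
  have hcomp : ((spinToOrthogonal p).toLinearEquiv : ℍ[ℝ] →ₗ[ℝ] ℍ[ℝ]) =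
      LinearMap.mulLeft ℝ (p.1 : ℍ[ℝ]) ∘ₗ LinearMap.mulRight ℝ (star (p.2 : ℍ[ℝ])) :=
    LinearMap.ext fun z => by simp [mul_assoc]
  rw [hcomp, LinearMap.det_comp, det_mulLeft, det_mulRight, normSq_star, normSq_coe_unitary,
    normSq_coe_unitary, one_pow, one_mul]

theorem spinToOrthogonal_eq_one_iff (p : unitary ℍ[ℝ] × unitary ℍ[ℝ]) :
    spinToOrthogonal p = 1 ↔ p = 1 ∨ p = -1 := by
  refine ⟨fun h => ?_, by rintro (rfl | rfl) <;> ext1 z <;> simp [Unitary.coe_neg]⟩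
  obtain ⟨x, y⟩ := p
  have hfix (z : ℍ[ℝ]) : x * z * star (y : ℍ[ℝ]) = z := by
    simpa using DFunLike.congr_fun h z
  obtain rfl : x = y := by
    rw [← mul_inv_eq_one, ← Unitary.star_eq_inv]
    exact Subtype.ext (by simpa using hfix 1)
  have hcentral (z : ℍ[ℝ]) : x * z = z * x := by
    calc (x : ℍ[ℝ]) * z = x * z * star (x : ℍ[ℝ]) * x := by
          rw [mul_assoc _ (star _), Unitary.star_mul_self_of_mem x.2, mul_one]
      _ = z * x := by rw [hfix z]
  rcases eq_one_or_eq_neg_one_of_forall_mul_comm hcentral with rfl | rfl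
  exacts [Or.inl rfl, Or.inr rfl]

theorem reflection_mul_reflection_eq_spinToOrthogonal (a b : unitary ℍ[ℝ]) :
    reflection (ℝ ∙ (a : ℍ[ℝ]))ᗮ * reflection (ℝ ∙ (b : ℍ[ℝ]))ᗮ =
      spinToOrthogonal (a * star b, star a * b) := by
  ext1 z
  simp [reflection_orthogonal_span_unitary_apply, mul_assoc]

theorem mem_range_or_reflection_mul_mem_range (f : ℍ[ℝ] ≃ₗᵢ[ℝ] ℍ[ℝ]) :
    f ∈ spinToOrthogonal.range ∨ reflection (ℝ ∙ (1 : ℍ[ℝ]))ᗮ * f ∈ spinToOrthogonal.range := by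
  obtain ⟨l, -, rfl⟩ := f.reflections_generate_dim
  induction l with
  | nil => exact Or.inl (one_mem _)
  | cons v l ih =>
    rw [List.map_cons, List.prod_cons]
    rcases eq_or_ne v 0 with rfl | hv
    · have hzero : reflection (ℝ ∙ (0 : ℍ[ℝ]))ᗮ = 1 :=
        LinearIsometryEquiv.ext fun _ => reflection_mem_subspace_eq_self (by simp)
      rwa [hzero, one_mul]
    obtain ⟨a, ha⟩ := exists_unitary_reflection_eq hv
    have h1a : reflection (ℝ ∙ (1 : ℍ[ℝ]))ᗮ * reflection (ℝ ∙ (a : ℍ[ℝ]))ᗮ ∈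
        spinToOrthogonal.range := ⟨_, (reflection_mul_reflection_eq_spinToOrthogonal 1 a).symm⟩
    have ha1 : reflection (ℝ ∙ (a : ℍ[ℝ]))ᗮ * reflection (ℝ ∙ (1 : ℍ[ℝ]))ᗮ ∈
        spinToOrthogonal.range := ⟨_, (reflection_mul_reflection_eq_spinToOrthogonal a 1).symm⟩
    rw [ha]
    rcases ih with hg | hg
    · right
      simpa only [mul_assoc] using mul_mem h1a hg
    · left
      have hag := mul_mem ha1 hg
      rwa [mul_assoc, ← mul_assoc _ _ (l.map _).prod, reflection_mul_reflection, one_mul] at hag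

theorem mem_range_spinToOrthogonal_iff (f : ℍ[ℝ] ≃ₗᵢ[ℝ] ℍ[ℝ]) :
    f ∈ spinToOrthogonal.range ↔ LinearMap.det (f.toLinearEquiv : ℍ[ℝ] →ₗ[ℝ] ℍ[ℝ]) = 1 := by
  refine ⟨fun ⟨p, hp⟩ => hp ▸ det_spinToOrthogonal p, fun hf => ?_⟩
  refine (mem_range_or_reflection_mul_mem_range f).resolve_right fun ⟨p, hp⟩ => ?_
  have hdet := LinearIsometryEquiv.det_toLinearEquiv_mul (reflection (ℝ ∙ (1 : ℍ[ℝ]))ᗮ) f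
  rw [← hp, det_spinToOrthogonal, det_reflection_orthogonal_singleton one_ne_zero, hf] at hdet
  norm_num at hdet

end Quaternion

/-- For every pair `(x, y)` of unit quaternions, `z ↦ x * z * conj y` is a linear isometric
automorphism of `ℍ` (a 4-dimensional real inner product space); the resulting map `η₀` from
`Sp(1) × Sp(1)` to the linear isometric automorphisms of `ℍ` is a group homomorphism with
kernel exactly `{(1,1), (−1,−1)}` and range exactly the isometries of determinant `1`;
consequently it induces a group isomorphism from `(Sp(1) × Sp(1))/{±(1,1)}` onto
`SO(ℍ) ≅ SO(4)`. -/
theorem eta0_spin4_so4 :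
    ∃ η₀ : (unitary ℍ[ℝ] × unitary ℍ[ℝ]) →* (ℍ[ℝ] ≃ₗᵢ[ℝ] ℍ[ℝ]),
      (∀ (p : unitary ℍ[ℝ] × unitary ℍ[ℝ]) (z : ℍ[ℝ]),
        η₀ p z = (p.1 : ℍ[ℝ]) * z * star (p.2 : ℍ[ℝ])) ∧
      ((MonoidHom.ker η₀ : Subgroup (unitary ℍ[ℝ] × unitary ℍ[ℝ]))
          : Set (unitary ℍ[ℝ] × unitary ℍ[ℝ]))
        = {(1, 1), (⟨-1, negOne_negOne_mem_unitary⟩, ⟨-1, negOne_negOne_mem_unitary⟩)} ∧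
      (Set.range η₀
        = {f : ℍ[ℝ] ≃ₗᵢ[ℝ] ℍ[ℝ] |
            LinearMap.det (f.toLinearEquiv : ℍ[ℝ] →ₗ[ℝ] ℍ[ℝ]) = 1}) ∧
      Nonempty (((unitary ℍ[ℝ] × unitary ℍ[ℝ]) ⧸ MonoidHom.ker η₀) ≃* MonoidHom.range η₀) := by
  refine ⟨spinToOrthogonal, spinToOrthogonal_apply, ?_, ?_,
    ⟨QuotientGroup.quotientKerEquivRange spinToOrthogonal⟩⟩
  · ext p
    exact spinToOrthogonal_eq_one_iff p
  · rw [← MonoidHom.coe_range]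
    ext f
    exact mem_range_spinToOrthogonal_iff f

end
end

section
/- The Clifford algebra of the 4-dimensional real vector space ℝ⁴ equipped with the negative-definite quadratic form Q(v) = −‖v‖² (so that generators satisfy eᵢ² = −1 and eᵢeⱼ = −eⱼeᵢ for i ≠ j) is isomorphic as an ℝ-algebra to the algebra M₂(ℍ) of 2×2 matrices with quaternion entries. -/
/-!
Read `v ∈ ℝ⁴` as a quaternion `q`. The matrix `!![0, q; -q̄, 0]` squares to `-|q|² = Q v`, so
`v ↦ !![0, q; -q̄, 0]` extends to an algebra map `Cl(Q) → M₂(ℍ)`. Products of two generators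
give the scalar matrices `i, j, k`, and from these one gets `diag(1, -1)` and then all matrix
units, so the map is onto. Both algebras have dimension 16 (in characteristic `≠ 2` the
Clifford algebra is isomorphic to the exterior algebra as a vector space), so it is bijective.
-/

noncomputable section

open Quaternion

/-- The negative-definite quadratic form `Q(v) = −‖v‖²` on `ℝ⁴`. -/
def Qneg : QuadraticForm ℝ (EuclideanSpace ℝ (Fin 4)) :=
  -(LinearMap.BilinMap.toQuadraticMap (innerₗ _ : LinearMap.BilinForm ℝ (EuclideanSpace ℝ (Fin 4))))

open Matrix Module

namespace CliffordAlgebra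

variable {K V : Type*} [Field K] [Invertible (2 : K)] [AddCommGroup V] [Module K V]
  [FiniteDimensional K V] (Q : QuadraticForm K V)

instance : FiniteDimensional K (CliffordAlgebra Q) :=
  have : FiniteDimensional K (ExteriorAlgebra K V) := .of_basis (finBasis K V).ExteriorAlgebra
  .equiv (equivExterior Q).symm

theorem finrank_eq_two_pow : finrank K (CliffordAlgebra Q) = 2 ^ finrank K V := by
  rw [(equivExterior Q).finrank_eq, finrank_eq_card_basis (finBasis K V).ExteriorAlgebra,
    Fintype.card_finset, Fintype.card_fin]

end CliffordAlgebra

namespace Matrix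

variable {R A n : Type*} [CommRing R] [Ring A] [Algebra R A] [Fintype n] [DecidableEq n]

theorem scalar_mul_single_one (a : A) (i j : n) : scalar n a * single i j 1 = single i j a := by
  ext k l
  simp [scalar_apply, diagonal_mul, single_apply]

theorem subalgebra_eq_top_of_single_mem_of_scalar_mem {S : Subalgebra R (Matrix n n A)}
    (hsingle : ∀ i j, single i j (1 : A) ∈ S) (hscalar : ∀ a, scalar n a ∈ S) : S = ⊤ := by
  refine eq_top_iff.2 fun M _ => ?_
  rw [matrix_eq_sum_single M]
  refine Subalgebra.sum_mem _ fun i _ => Subalgebra.sum_mem _ fun j _ => ?_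
  rw [← scalar_mul_single_one]
  exact S.mul_mem (hscalar _) (hsingle i j)

end Matrix

namespace QuaternionAlgebra

variable {R : Type*} [CommRing R] {c₁ c₂ c₃ : R}

theorem adjoin_i_j_k_eq_top :
    Algebra.adjoin R {(Basis.self R).i, (Basis.self R).j, (Basis.self R).k} =
      (⊤ : Subalgebra R ℍ[R,c₁,c₂,c₃]) := by
  rw [← Basis.range_liftHom, ← Algebra.range_id]
  congr 1
  ext <;> simp [Basis.lift]

end QuaternionAlgebra

namespace Quaternion

open QuaternionAlgebra

variable {R : Type*} [CommRing R]

def offDiagStar : ℍ[R] →ₗ[R] Matrix (Fin 2) (Fin 2) ℍ[R] where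
  toFun q := !![0, q; -star q, 0]
  map_add' p q := Matrix.ext fun i j => by fin_cases i <;> fin_cases j <;> simp [add_comm]
  map_smul' c q := Matrix.ext fun i j => by fin_cases i <;> fin_cases j <;> simp

theorem offDiagStar_apply (q : ℍ[R]) : offDiagStar q = !![0, q; -star q, 0] := rfl

theorem offDiagStar_mul_offDiagStar (p q : ℍ[R]) :
    offDiagStar p * offDiagStar q = !![-(p * star q), 0; 0, -(star p * q)] := by
  simp [offDiagStar_apply]

theorem offDiagStar_mul_self (q : ℍ[R]) :
    offDiagStar q * offDiagStar q = algebraMap R _ (-normSq q) := by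
  rw [offDiagStar_mul_offDiagStar, self_mul_star, star_mul_self, algebraMap_eq_diagonal,
    diagonal_fin_two]
  simp

theorem scalar_mem_adjoin_range_offDiagStar (a : ℍ[R]) :
    scalar (Fin 2) a ∈ Algebra.adjoin R (Set.range (offDiagStar (R := R))) := by
  set S := Algebra.adjoin R (Set.range (offDiagStar (R := R)))
  have hprod (p q r : ℍ[R]) (h₁ : -(p * star q) = r) (h₂ : -(star p * q) = r) :
      scalar (Fin 2) r ∈ S := by
    rw [scalar_apply, diagonal_fin_two]
    convert S.mul_mem (Algebra.subset_adjoin ⟨p, rfl⟩) (Algebra.subset_adjoin ⟨q, rfl⟩) using 1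
    rw [offDiagStar_mul_offDiagStar, h₁, h₂]
  have htop := adjoin_i_j_k_eq_top (R := R) (c₁ := -1) (c₂ := 0) (c₃ := -1)
  set i : ℍ[R] := (Basis.self R).i with hi
  set j : ℍ[R] := (Basis.self R).j with hj
  set k : ℍ[R] := (Basis.self R).k with hk
  have hijk : Algebra.adjoin R {i, j, k} ≤ S.comap (scalarAlgHom (Fin 2) R) := by
    rw [Algebra.adjoin_le_iff]
    rintro a (rfl | rfl | rfl)
    -- `simp` has to expand the products before `Basis.self` is unfolded: its fields are
    -- typed in `ℍ[R,-1,0,-1]`, where the `ℍ[R]` simp lemmas no longer apply.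
    · refine hprod j k _ ?_ ?_ <;> ext <;> simp <;> simp [hi, hj, hk, Basis.self]
    · refine hprod k i _ ?_ ?_ <;> ext <;> simp <;> simp [hi, hj, hk, Basis.self]
    · refine hprod i j _ ?_ ?_ <;> ext <;> simp <;> simp [hi, hj, hk, Basis.self]
  exact hijk (htop.ge (Algebra.mem_top (x := a)))

theorem single_mem_adjoin_range_offDiagStar [Invertible (2 : R)] (a b : Fin 2) :
    single a b 1 ∈ Algebra.adjoin R (Set.range (offDiagStar (R := R))) := by
  set S := Algebra.adjoin R (Set.range (offDiagStar (R := R)))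
  have hX (q : ℍ[R]) : offDiagStar q ∈ S := Algebra.subset_adjoin ⟨q, rfl⟩
  set i : ℍ[R] := (Basis.self R).i with hi
  have hD : !![1, 0; 0, -1] ∈ S := by
    have h₁ : -(i * star 1) * i = 1 := by ext <;> simp <;> simp [hi, Basis.self]
    have h₂ : -(star i * 1) * i = -1 := by ext <;> simp <;> simp [hi, Basis.self]
    have : offDiagStar i * offDiagStar 1 * scalar (Fin 2) i = !![1, 0; 0, -1] := by
      rw [offDiagStar_mul_offDiagStar, scalar_apply, diagonal_fin_two, mul_fin_two]
      simp only [mul_zero, zero_mul, add_zero, zero_add, h₁, h₂]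
    rw [← this]
    exact S.mul_mem (S.mul_mem (hX _) (hX _)) (scalar_mem_adjoin_range_offDiagStar i)
  have h00 : single 0 0 1 ∈ S := by
    have : (single 0 0 1 : Matrix (Fin 2) (Fin 2) ℍ[R]) = (⅟2 : R) • (1 + !![1, 0; 0, -1]) := by
      rw [one_fin_two]
      refine Matrix.ext fun i j => ?_
      fin_cases i <;> fin_cases j <;> ext <;> simp
    rw [this]
    exact S.smul_mem (S.add_mem S.one_mem hD) _
  have hE : (single 0 0 1 : Matrix (Fin 2) (Fin 2) ℍ[R]) = !![1, 0; 0, 0] := by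
    rw [eta_fin_two (single 0 0 1)]; simp
  have h01 : (single 0 1 1 : Matrix (Fin 2) (Fin 2) ℍ[R]) = single 0 0 1 * offDiagStar 1 := by
    rw [hE, offDiagStar_apply, mul_fin_two, eta_fin_two (single 0 1 1)]; simp
  have h10 : (single 1 0 1 : Matrix (Fin 2) (Fin 2) ℍ[R]) = -(offDiagStar 1 * single 0 0 1) := by
    rw [hE, offDiagStar_apply, mul_fin_two, eta_fin_two (single 1 0 1)]; simp
  have h11 : (single 1 1 1 : Matrix (Fin 2) (Fin 2) ℍ[R]) = 1 - single 0 0 1 := by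
    refine Matrix.ext fun i j => ?_; fin_cases i <;> fin_cases j <;> simp
  revert a b
  simp only [Fin.forall_fin_two, h01, h10, h11]
  exact ⟨⟨h00, S.mul_mem h00 (hX 1)⟩, S.neg_mem (S.mul_mem (hX 1) h00), S.sub_mem S.one_mem h00⟩

theorem adjoin_range_offDiagStar [Invertible (2 : R)] :
    Algebra.adjoin R (Set.range offDiagStar) = (⊤ : Subalgebra R (Matrix (Fin 2) (Fin 2) ℍ[R])) :=
  subalgebra_eq_top_of_single_mem_of_scalar_mem single_mem_adjoin_range_offDiagStar
    scalar_mem_adjoin_range_offDiagStar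

end Quaternion

theorem Qneg_apply (v : EuclideanSpace ℝ (Fin 4)) : Qneg v = -‖v‖ ^ 2 := by
  simp [Qneg]

def cliffordMatrix : EuclideanSpace ℝ (Fin 4) →ₗ[ℝ] Matrix (Fin 2) (Fin 2) ℍ[ℝ] :=
  offDiagStar ∘ₗ linearIsometryEquivTuple.symm.toLinearEquiv.toLinearMap

theorem cliffordMatrix_mul_self (v : EuclideanSpace ℝ (Fin 4)) :
    cliffordMatrix v * cliffordMatrix v = algebraMap ℝ _ (Qneg v) := by
  rw [cliffordMatrix, LinearMap.comp_apply, offDiagStar_mul_self, normSq_eq_norm_mul_self,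
    LinearEquiv.coe_coe, LinearIsometryEquiv.coe_toLinearEquiv, LinearIsometryEquiv.norm_map,
    Qneg_apply, sq]

def cliffordHom : CliffordAlgebra Qneg →ₐ[ℝ] Matrix (Fin 2) (Fin 2) ℍ[ℝ] :=
  CliffordAlgebra.lift Qneg ⟨cliffordMatrix, cliffordMatrix_mul_self⟩

theorem cliffordHom_surjective : Function.Surjective cliffordHom := by
  rw [← AlgHom.range_eq_top, cliffordHom, CliffordAlgebra.range_lift, cliffordMatrix,
    LinearMap.coe_comp, LinearEquiv.coe_coe,
    linearIsometryEquivTuple.symm.toLinearEquiv.surjective.range_comp]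
  exact adjoin_range_offDiagStar

/-- The Clifford algebra of `ℝ⁴` with the quadratic form `Q(v) = −‖v‖²` (so that the
generators satisfy `eᵢ² = −1`, `eᵢeⱼ = −eⱼeᵢ` for `i ≠ j`) is isomorphic as an ℝ-algebra to
the algebra `M₂(ℍ)` of 2×2 quaternion matrices. -/
theorem clifford_R4_iso_M2H :
    (∀ v : EuclideanSpace ℝ (Fin 4), Qneg v = -‖v‖ ^ 2) ∧
    Nonempty (CliffordAlgebra Qneg ≃ₐ[ℝ] Matrix (Fin 2) (Fin 2) ℍ[ℝ]) := by
  have hdim : finrank ℝ (CliffordAlgebra Qneg) = finrank ℝ (Matrix (Fin 2) (Fin 2) ℍ[ℝ]) := by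
    rw [CliffordAlgebra.finrank_eq_two_pow, finrank_euclideanSpace_fin, finrank_matrix,
      Quaternion.finrank_eq_four]
    simp
  have hinj : Function.Injective cliffordHom :=
    (LinearMap.injective_iff_surjective_of_finrank_eq_finrank hdim
      (f := cliffordHom.toLinearMap)).2 cliffordHom_surjective
  exact ⟨Qneg_apply, ⟨AlgEquiv.ofBijective cliffordHom ⟨hinj, cliffordHom_surjective⟩⟩⟩

end
end

section
/- The skew-symmetric bilinear bracket on ℝ⁶ determined on the standard basis by [e₁,e₃] = −e₅, [e₂,e₄] = e₅, [e₁,e₄] = −e₆, [e₂,e₃] = −e₆, with all other brackets of basis vectors equal to zero, satisfies the Jacobi identity, hence defines a (2-step nilpotent) Lie algebra 𝔫₂₈; moreover the linear endomorphism D of ℝ⁶ given by the diagonal matrix diag(1/2, 1/2, 1/2, 1/2, 1, 1) is a derivation of 𝔫₂₈, i.e. D[x,y] = [Dx, y] + [x, Dy] for all x, y. -/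
noncomputable section

/-- The bracket of the nilpotent Lie algebra `𝔫₂₈` on `ℝ⁶` (0-based indices), determined by
`[e₁,e₃] = −e₅`, `[e₂,e₄] = e₅`, `[e₁,e₄] = −e₆`, `[e₂,e₃] = −e₆`, other basis brackets zero. -/
def br6 (x y : Fin 6 → ℝ) : Fin 6 → ℝ :=
  ![0, 0, 0, 0,
    -(x 0 * y 2 - x 2 * y 0) + (x 1 * y 3 - x 3 * y 1),
    -(x 0 * y 3 - x 3 * y 0) - (x 1 * y 2 - x 2 * y 1)]

/-- The standard basis vector `eᵢ` of `ℝ⁶` (0-based). -/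
def e6 (i : Fin 6) : Fin 6 → ℝ := Pi.single i 1

/-- The diagonal endomorphism `D = diag(1/2, 1/2, 1/2, 1/2, 1, 1)` of `ℝ⁶`. -/
def D6 (x : Fin 6 → ℝ) : Fin 6 → ℝ :=
  fun i => (if (i : ℕ) < 4 then (1 / 2 : ℝ) else 1) * x i

/-- The bracket on `ℝ⁶` determined on the standard basis by `[e₁,e₃] = −e₅`, `[e₂,e₄] = e₅`,
`[e₁,e₄] = −e₆`, `[e₂,e₃] = −e₆` (all other basis brackets zero) is bilinear, skew-symmetric
and satisfies the Jacobi identity, hence defines a Lie algebra `𝔫₂₈`; moreover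
`D = diag(1/2,1/2,1/2,1/2,1,1)` is a derivation of `𝔫₂₈`. -/
theorem n28_lie_algebra_and_derivation :
    -- bilinearity
    (∀ x x' y, br6 (x + x') y = br6 x y + br6 x' y) ∧
    (∀ (c : ℝ) x y, br6 (c • x) y = c • br6 x y) ∧
    (∀ x y y', br6 x (y + y') = br6 x y + br6 x y') ∧
    (∀ (c : ℝ) x y, br6 x (c • y) = c • br6 x y) ∧
    -- skew-symmetry
    (∀ x y, br6 x y = -br6 y x) ∧
    -- values on the standard basis
    (br6 (e6 0) (e6 2) = -e6 4) ∧ (br6 (e6 1) (e6 3) = e6 4) ∧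
    (br6 (e6 0) (e6 3) = -e6 5) ∧ (br6 (e6 1) (e6 2) = -e6 5) ∧
    (∀ i j : Fin 6,
      (i, j) ∉ ({(0, 2), (2, 0), (1, 3), (3, 1), (0, 3), (3, 0), (1, 2), (2, 1)} :
        Set (Fin 6 × Fin 6)) → br6 (e6 i) (e6 j) = 0) ∧
    -- Jacobi identity
    (∀ x y z, br6 (br6 x y) z + br6 (br6 y z) x + br6 (br6 z x) y = 0) ∧
    -- the Lie algebra is 2-step nilpotent
    (∀ x y z, br6 (br6 x y) z = 0) ∧
    -- D is a derivation
    (∀ x y, D6 (br6 x y) = br6 (D6 x) y + br6 x (D6 y)) := by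
  have key : ∀ x y i, br6 x y i =
      (if (i : ℕ) = 4 then -(x 0 * y 2 - x 2 * y 0) + (x 1 * y 3 - x 3 * y 1)
       else if (i : ℕ) = 5 then -(x 0 * y 3 - x 3 * y 0) - (x 1 * y 2 - x 2 * y 1) else 0) := by
    intro x y i; fin_cases i <;> rfl
  have fv : ((4 : Fin 6) : ℕ) = 4 ∧ ((5 : Fin 6) : ℕ) = 5 ∧ ((2 : Fin 6) : ℕ) = 2 ∧
      ((3 : Fin 6) : ℕ) = 3 := ⟨rfl, rfl, rfl, rfl⟩
  refine ⟨?_, ?_, ?_, ?_, ?_, ?_, ?_, ?_, ?_, ?_, ?_, ?_, ?_⟩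
  · intro x x' y; funext i; simp only [key, Pi.add_apply]; split_ifs <;> ring
  · intro c x y; funext i; simp only [key, Pi.smul_apply, smul_eq_mul]; split_ifs <;> ring
  · intro x y y'; funext i; simp only [key, Pi.add_apply]; split_ifs <;> ring
  · intro c x y; funext i; simp only [key, Pi.smul_apply, smul_eq_mul]; split_ifs <;> ring
  · intro x y; funext i; simp only [key, Pi.neg_apply]; split_ifs <;> ring
  · funext i; fin_cases i <;>
      norm_num [br6, e6, Pi.single_apply, Fin.ext_iff, fv.1, fv.2.1, fv.2.2.1, fv.2.2.2]
  · funext i; fin_cases i <;>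
      norm_num [br6, e6, Pi.single_apply, Fin.ext_iff, fv.1, fv.2.1, fv.2.2.1, fv.2.2.2]
  · funext i; fin_cases i <;>
      norm_num [br6, e6, Pi.single_apply, Fin.ext_iff, fv.1, fv.2.1, fv.2.2.1, fv.2.2.2]
  · funext i; fin_cases i <;>
      norm_num [br6, e6, Pi.single_apply, Fin.ext_iff, fv.1, fv.2.1, fv.2.2.1, fv.2.2.2]
  · intro i j h
    simp only [Set.mem_insert_iff, Set.mem_singleton_iff, Prod.mk.injEq, not_or] at h
    obtain ⟨h1, h2, h3, h4, h5, h6, h7, h8⟩ := h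
    have z : ∀ a b : Fin 6, ¬(i = a ∧ j = b) →
        (if a = i then (1 : ℝ) else 0) * (if b = j then 1 else 0) = 0 := by
      intro a b hab
      by_cases p : a = i
      · by_cases q : b = j
        · exact absurd ⟨p.symm, q.symm⟩ hab
        · simp [q]
      · simp [p]
    funext k
    rw [key]
    simp only [e6, Pi.single_apply]
    rw [z 0 2 (by tauto), z 2 0 (by tauto), z 1 3 (by tauto), z 3 1 (by tauto),
        z 0 3 (by tauto), z 3 0 (by tauto), z 1 2 (by tauto), z 2 1 (by tauto)]
    split_ifs <;> norm_num
  · intro x y z; funext i; fin_cases i <;> simp [br6] <;> first | rfl | ring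
  · intro x y z; funext i; fin_cases i <;> simp [br6] <;> first | rfl | ring
  · intro x y; funext i; fin_cases i <;>
      norm_num [br6, D6, Pi.add_apply, fv.1, fv.2.1, fv.2.2.1, fv.2.2.2,
        show ((0 : Fin 6) : ℕ) = 0 from rfl, show ((1 : Fin 6) : ℕ) = 1 from rfl] <;> ring

end
end
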